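/- arXiv:2404.08503 — 3 statements merged into one kernel-verified Lean document; each statement's English description precedes it below -/
import Mathlib

section
/- A point x is K-Pareto critical (i.e., (−int K) ∩ Im(JF(x)) = ∅) if and only if h(x,d) ≥ 0 for all d ∈ ℝ^n. -/
/-!
Write `A = JF(x)`. As `C` is compact, `h(x, d) < 0` iff `⟪A d, w⟫ < 0` for every `w ∈ C`, so
everything reduces to `int K = {y | ∀ w ∈ C, 0 < ⟪y, w⟫}`. An interior point pairs strictly
positively with every nonzero element of `K*`. Conversely, the right-hand side is open because `C`
is compact, and it lies in `K` because `K = K**` (bipolar theorem) and `K*` is generated by `C`.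
-/

open Set Filter Topology
open scoped RealInnerProductSpace

section

variable {E : Type*} [NormedAddCommGroup E] [InnerProductSpace ℝ E]

theorem exists_properCone_coe_eq {K : Set E} (hKclosed : IsClosed K) (hKconv : Convex ℝ K)
    (hKcone : ∀ c : ℝ, 0 ≤ c → ∀ x ∈ K, c • x ∈ K) (hKne : K.Nonempty) :
    ∃ P : ProperCone ℝ E, (P : Set E) = K :=
  ⟨{ carrier := K
     zero_mem' := by simpa using hKcone 0 le_rfl _ hKne.some_mem
     add_mem' := fun {a b} ha hb => by
       have hmid : (1 / 2 : ℝ) • a + (1 / 2 : ℝ) • b ∈ K :=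
         hKconv ha hb (by norm_num) (by norm_num) (by norm_num)
       simpa [smul_add, smul_smul] using hKcone 2 zero_le_two _ hmid
     smul_mem' := fun c x hx => hKcone c c.2 x hx
     isClosed' := hKclosed }, rfl⟩

theorem inner_pos_of_mem_interior {K : Set E} {v w : E} (hv : v ∈ interior K)
    (hw : ∀ y ∈ K, 0 ≤ ⟪y, w⟫) (hw0 : w ≠ 0) : 0 < ⟪v, w⟫ := by
  have hnear : ∀ᶠ t : ℝ in 𝓝 0, v - t • w ∈ K := by
    have hcont : Continuous fun t : ℝ => v - t • w := by fun_prop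
    exact hcont.continuousAt.preimage_mem_nhds (by simpa using mem_interior_iff_mem_nhds.1 hv)
  obtain ⟨t, htK, ht⟩ :=
    ((hnear.filter_mono nhdsWithin_le_nhds).and (self_mem_nhdsWithin (s := Ioi 0))).exists
  have hpair := hw _ htK
  rw [inner_sub_left, real_inner_smul_left, real_inner_self_eq_norm_sq] at hpair
  have : 0 < t * ‖w‖ ^ 2 := mul_pos ht (by positivity)
  linarith

theorem isOpen_setOf_forall_inner_pos {C : Set E} (hC : IsCompact C) :
    IsOpen {y : E | ∀ w ∈ C, 0 < ⟪y, w⟫} := by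
  refine isOpen_iff_mem_nhds.2 fun y hy => hC.eventually_forall_of_forall_eventually fun w hw => ?_
  exact (isOpen_lt continuous_const continuous_inner).mem_nhds (hy w hw)

variable [CompleteSpace E]

theorem mem_of_forall_inner_nonneg {K C : Set E} (hKclosed : IsClosed K) (hKconv : Convex ℝ K)
    (hKcone : ∀ c : ℝ, 0 ≤ c → ∀ x ∈ K, c • x ∈ K) (hKne : K.Nonempty)
    (hCgen : (ProperCone.innerDual K : Set E) ⊆
      {y | ∃ c : ℝ, 0 ≤ c ∧ ∃ u ∈ convexHull ℝ C, y = c • u})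
    {z : E} (hz : ∀ w ∈ C, 0 ≤ ⟪w, z⟫) : z ∈ K := by
  obtain ⟨P, rfl⟩ := exists_properCone_coe_eq hKclosed hKconv hKcone hKne
  rw [← ProperCone.innerDual_innerDual P, SetLike.mem_coe, ProperCone.mem_innerDual]
  intro y hy
  obtain ⟨c, hc, u, hu, rfl⟩ := hCgen hy
  have hhalfSpace : Convex ℝ {u : E | 0 ≤ ⟪u, z⟫} :=
    convex_halfSpace_ge
      ⟨fun a b => inner_add_left a b z, fun c a => real_inner_smul_left a z c⟩ 0
  rw [real_inner_smul_left]
  exact mul_nonneg hc (convexHull_min hz hhalfSpace hu)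

theorem mem_interior_iff_forall_inner_pos {K C : Set E} (hKclosed : IsClosed K)
    (hKconv : Convex ℝ K) (hKcone : ∀ c : ℝ, 0 ≤ c → ∀ x ∈ K, c • x ∈ K)
    (hKint : (interior K).Nonempty) (hCcomp : IsCompact C)
    (hCsub : C ⊆ ProperCone.innerDual K \ {0})
    (hCgen : (ProperCone.innerDual K : Set E) ⊆
      {y | ∃ c : ℝ, 0 ≤ c ∧ ∃ u ∈ convexHull ℝ C, y = c • u})
    {y : E} : y ∈ interior K ↔ ∀ w ∈ C, 0 < ⟪y, w⟫ := by
  refine ⟨fun hy w hw => inner_pos_of_mem_interior hy (hCsub hw).1 (hCsub hw).2, fun hy => ?_⟩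
  refine interior_maximal (fun z hz => ?_) (isOpen_setOf_forall_inner_pos hCcomp) hy
  refine mem_of_forall_inner_nonneg hKclosed hKconv hKcone (hKint.mono interior_subset) hCgen ?_
  exact fun w hw => real_inner_comm z w ▸ (hz w hw).le

end

theorem critical_iff_h_nonneg_general {n m : ℕ}
    (K : Set (EuclideanSpace ℝ (Fin m)))
    (hKclosed : IsClosed K) (hKconv : Convex ℝ K)
    (hKcone : ∀ (c : ℝ), 0 ≤ c → ∀ x ∈ K, c • x ∈ K)
    (hKint : (interior K).Nonempty)
    (C : Set (EuclideanSpace ℝ (Fin m)))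
    (hCne : C.Nonempty) (hCcomp : IsCompact C)
    (hCsub : C ⊆ {w | ∀ y ∈ K, 0 ≤ (inner ℝ y w : ℝ)} \ {0})
    (hCgen : {w | ∀ y ∈ K, 0 ≤ (inner ℝ y w : ℝ)} =
      {x | ∃ c : ℝ, 0 ≤ c ∧ ∃ z ∈ convexHull ℝ C, x = c • z})
    (F : EuclideanSpace ℝ (Fin n) → EuclideanSpace ℝ (Fin m))
    (h : EuclideanSpace ℝ (Fin n) → EuclideanSpace ℝ (Fin n) → ℝ)
    (hh : ∀ x d, h x d = sSup ((fun w => (inner ℝ (fderiv ℝ F x d) w : ℝ)) '' C))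
    (x : EuclideanSpace ℝ (Fin n)) :
    (-(interior K)) ∩ Set.range (fderiv ℝ F x) = ∅ ↔ ∀ d, 0 ≤ h x d := by
  have hdescent : ∀ d, -(fderiv ℝ F x d) ∈ interior K ↔ h x d < 0 := fun d => by
    rw [mem_interior_iff_forall_inner_pos hKclosed hKconv hKcone hKint hCcomp hCsub hCgen.subset,
      hh, hCcomp.sSup_lt_iff_of_continuous hCne (by fun_prop)]
    simp only [inner_neg_left, neg_pos]
  refine ⟨fun hcrit d => not_lt.1 fun hneg => hcrit.subset ⟨(hdescent d).2 hneg, d, rfl⟩,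
    fun hnonneg => eq_empty_iff_forall_notMem.2 ?_⟩
  rintro - ⟨hint, d, rfl⟩
  exact (hnonneg d).not_gt ((hdescent d).1 hint)

theorem critical_iff_h_nonneg {n m : ℕ}
    (K : Set (EuclideanSpace ℝ (Fin m)))
    (hKclosed : IsClosed K) (hKconv : Convex ℝ K)
    (hKcone : ∀ (c : ℝ), 0 ≤ c → ∀ x ∈ K, c • x ∈ K)
    (hKpointed : K ∩ (-K) ⊆ {0}) (hKint : (interior K).Nonempty)
    (C : Set (EuclideanSpace ℝ (Fin m)))
    (hCne : C.Nonempty) (hCcomp : IsCompact C)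
    (hCsub : C ⊆ {w | ∀ y ∈ K, 0 ≤ (inner ℝ y w : ℝ)} \ {0})
    (hCgen : {w | ∀ y ∈ K, 0 ≤ (inner ℝ y w : ℝ)} =
      {x | ∃ c : ℝ, 0 ≤ c ∧ ∃ z ∈ convexHull ℝ C, x = c • z})
    (F : EuclideanSpace ℝ (Fin n) → EuclideanSpace ℝ (Fin m))
    (hF : ContDiff ℝ 1 F)
    (h : EuclideanSpace ℝ (Fin n) → EuclideanSpace ℝ (Fin n) → ℝ)
    (hh : ∀ x d, h x d = sSup ((fun w => (inner ℝ (fderiv ℝ F x d) w : ℝ)) '' C))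
    (x : EuclideanSpace ℝ (Fin n)) :
    (-(interior K)) ∩ Set.range (fderiv ℝ F x) = ∅ ↔ ∀ d, 0 ≤ h x d :=
  critical_iff_h_nonneg_general K hKclosed hKconv hKcone hKint C hCne hCcomp hCsub hCgen F h hh x
end

section
/- The following are equivalent: (i) x is not a K-Pareto critical point; (ii) v(x) ≠ 0; (iii) θ(x) < 0. -/
/-!
`d ↦ h x d` is a supremum of linear functionals of `d`, hence positively homogeneous.
Homogeneity gives `h x 0 = 0`, so `θ(x) ≤ 0`, and `θ(x) < 0` forces `v(x) ≠ 0`.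
If `v(x) ≠ 0` then `h x v(x) ≤ θ(x) - ½‖v(x)‖² < 0`, so `x` is not critical.
If `h x d < 0`, then `t = -h x d / ‖d‖²` makes `h x (t • d) + ½‖t • d‖² = t h x d / 2 < 0`,
so `θ(x) < 0`.
-/

open scoped InnerProductSpace Pointwise in
theorem sSup_image_inner_smul_left_of_nonneg {E : Type*} [NormedAddCommGroup E]
    [InnerProductSpace ℝ E] (C : Set E) (u : E) {t : ℝ} (ht : 0 ≤ t) :
    sSup ((fun w => ⟪t • u, w⟫_ℝ) '' C) = t * sSup ((fun w => ⟪u, w⟫_ℝ) '' C) := by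
  have himage : (fun w => ⟪t • u, w⟫_ℝ) '' C = t • ((fun w => ⟪u, w⟫_ℝ) '' C) := by
    simp only [real_inner_smul_left, ← Set.image_smul, Set.image_image, smul_eq_mul]
  rw [himage, Real.sSup_smul_of_nonneg ht, smul_eq_mul]

section PositivelyHomogeneous

variable {E : Type*} [NormedAddCommGroup E] [NormedSpace ℝ E] {φ : E → ℝ}

theorem map_zero_of_posHomogeneous (hφ : ∀ t : ℝ, 0 ≤ t → ∀ d, φ (t • d) = t * φ d) :
    φ 0 = 0 := by
  simpa using hφ 0 le_rfl 0

theorem exists_add_half_sq_norm_neg_of_posHomogeneous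
    (hφ : ∀ t : ℝ, 0 ≤ t → ∀ d, φ (t • d) = t * φ d) {d : E} (hd : φ d < 0) :
    ∃ d', φ d' + 1 / 2 * ‖d'‖ ^ 2 < 0 := by
  have hd0 : d ≠ 0 := by
    rintro rfl
    exact hd.ne (map_zero_of_posHomogeneous hφ)
  have hnorm : 0 < ‖d‖ ^ 2 := by positivity
  set t := -φ d / ‖d‖ ^ 2
  have ht : 0 < t := div_pos (neg_pos.mpr hd) hnorm
  have ht_norm : t * ‖d‖ ^ 2 = -φ d := div_mul_cancel₀ _ hnorm.ne'
  refine ⟨t • d, ?_⟩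
  calc φ (t • d) + 1 / 2 * ‖t • d‖ ^ 2
      = t * φ d + 1 / 2 * t * (t * ‖d‖ ^ 2) := by
        rw [hφ t ht.le, norm_smul, Real.norm_of_nonneg ht.le]; ring
    _ = t * φ d / 2 := by rw [ht_norm]; ring
    _ < 0 := by nlinarith

theorem not_nonneg_iff_ne_zero_and_iff_neg_of_isMinimizer
    (hφ : ∀ t : ℝ, 0 ≤ t → ∀ d, φ (t • d) = t * φ d) {v : E}
    (hv : ∀ d, φ v + 1 / 2 * ‖v‖ ^ 2 ≤ φ d + 1 / 2 * ‖d‖ ^ 2) :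
    ((¬ ∀ d, 0 ≤ φ d) ↔ v ≠ 0) ∧ ((¬ ∀ d, 0 ≤ φ d) ↔ φ v + 1 / 2 * ‖v‖ ^ 2 < 0) := by
  have hφ0 := map_zero_of_posHomogeneous hφ
  have hv0 : φ v + 1 / 2 * ‖v‖ ^ 2 ≤ 0 := by simpa [hφ0] using hv 0
  have value_neg : (¬ ∀ d, 0 ≤ φ d) → φ v + 1 / 2 * ‖v‖ ^ 2 < 0 := by
    push Not
    rintro ⟨d, hd⟩
    obtain ⟨d', hd'⟩ := exists_add_half_sq_norm_neg_of_posHomogeneous hφ hd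
    exact (hv d').trans_lt hd'
  have ne_zero : φ v + 1 / 2 * ‖v‖ ^ 2 < 0 → v ≠ 0 := by
    rintro hlt rfl
    simp [hφ0] at hlt
  have not_nonneg : v ≠ 0 → ¬ ∀ d, 0 ≤ φ d := by
    intro hv_ne hnonneg
    have : 0 < ‖v‖ ^ 2 := by positivity
    linarith [hnonneg v]
  exact ⟨⟨ne_zero ∘ value_neg, not_nonneg⟩, ⟨value_neg, not_nonneg ∘ ne_zero⟩⟩

end PositivelyHomogeneous

theorem noncritical_tfae_general {n m : ℕ}
    (C : Set (EuclideanSpace ℝ (Fin m)))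
    (F : EuclideanSpace ℝ (Fin n) → EuclideanSpace ℝ (Fin m))
    (h : EuclideanSpace ℝ (Fin n) → EuclideanSpace ℝ (Fin n) → ℝ)
    (hh : ∀ x d, h x d = sSup ((fun w => (inner ℝ (fderiv ℝ F x d) w : ℝ)) '' C))
    (x : EuclideanSpace ℝ (Fin n))
    (v : EuclideanSpace ℝ (Fin n))
    (hv : ∀ d, h x v + (1 / 2) * ‖v‖ ^ 2 ≤ h x d + (1 / 2) * ‖d‖ ^ 2)
    (θ : ℝ) (hθ : θ = h x v + (1 / 2) * ‖v‖ ^ 2) :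
    ((¬ ∀ d, 0 ≤ h x d) ↔ v ≠ 0) ∧ ((¬ ∀ d, 0 ≤ h x d) ↔ θ < 0) := by
  subst hθ
  refine not_nonneg_iff_ne_zero_and_iff_neg_of_isMinimizer (fun t ht d => ?_) hv
  rw [hh, hh, map_smul, sSup_image_inner_smul_left_of_nonneg C _ ht]

theorem noncritical_tfae {n m : ℕ}
    (K : Set (EuclideanSpace ℝ (Fin m)))
    (hKclosed : IsClosed K) (hKconv : Convex ℝ K)
    (hKcone : ∀ (c : ℝ), 0 ≤ c → ∀ x ∈ K, c • x ∈ K)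
    (hKpointed : K ∩ (-K) ⊆ {0}) (hKint : (interior K).Nonempty)
    (C : Set (EuclideanSpace ℝ (Fin m)))
    (hCne : C.Nonempty) (hCcomp : IsCompact C)
    (hCsub : C ⊆ {w | ∀ y ∈ K, 0 ≤ (inner ℝ y w : ℝ)} \ {0})
    (hCgen : {w | ∀ y ∈ K, 0 ≤ (inner ℝ y w : ℝ)} =
      {x | ∃ c : ℝ, 0 ≤ c ∧ ∃ z ∈ convexHull ℝ C, x = c • z})
    (F : EuclideanSpace ℝ (Fin n) → EuclideanSpace ℝ (Fin m))
    (hF : ContDiff ℝ 1 F)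
    (h : EuclideanSpace ℝ (Fin n) → EuclideanSpace ℝ (Fin n) → ℝ)
    (hh : ∀ x d, h x d = sSup ((fun w => (inner ℝ (fderiv ℝ F x d) w : ℝ)) '' C))
    (x : EuclideanSpace ℝ (Fin n))
    (v : EuclideanSpace ℝ (Fin n))
    (hv : ∀ d, h x v + (1 / 2) * ‖v‖ ^ 2 ≤ h x d + (1 / 2) * ‖d‖ ^ 2)
    (θ : ℝ) (hθ : θ = h x v + (1 / 2) * ‖v‖ ^ 2) :
    ((¬ ∀ d, 0 ≤ h x d) ↔ v ≠ 0) ∧ ((¬ ∀ d, 0 ≤ h x d) ↔ θ < 0) :=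
  noncritical_tfae_general C F h hh x v hv θ hθ
end

section
/- For all k ≥ 0, the direction d^k generated by the modified PRP-type conjugate gradient method satisfies the sufficient descent condition h(x^k, d^k) ≤ (1 − 2/μ) h(x^k, v(x^k)), where μ > 2. -/
/-!
Since `d ↦ h(x, d)` is subadditive and positively homogeneous and `β_k ≥ 0`, we get
`h(x^k, d^k) ≤ h(x^k, v^k) + β_k h(x^k, d^{k-1})`. The extra term `β_k h(x^k, d^{k-1})` is
nonpositive unless both `h(x^k, d^{k-1})` and `h(x^{k-1}, v^k)` are positive, and in that case
the first entry of the `max` in the denominator of `β_k` bounds it by `-(2/μ) h(x^k, v^k)`.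
-/

open scoped Pointwise

section SupportFunction

variable {E : Type*} [NormedAddCommGroup E] [InnerProductSpace ℝ E] {C : Set E}

theorem sSup_image_inner_add_le (hCne : C.Nonempty) (hCcomp : IsCompact C) (y z : E) :
    sSup ((fun w => inner ℝ (y + z) w) '' C) ≤
      sSup ((fun w => inner ℝ y w) '' C) + sSup ((fun w => inner ℝ z w) '' C) := by
  have hbdd : ∀ u : E, BddAbove ((fun w => inner ℝ u w) '' C) := fun u =>
    (hCcomp.image (continuous_const.inner continuous_id)).bddAbove
  refine csSup_le (hCne.image _) ?_
  rintro _ ⟨w, hw, rfl⟩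
  simp only [inner_add_left]
  exact add_le_add (le_csSup (hbdd y) ⟨w, hw, rfl⟩) (le_csSup (hbdd z) ⟨w, hw, rfl⟩)

theorem sSup_image_inner_smul_of_nonneg {c : ℝ} (hc : 0 ≤ c) (y : E) :
    sSup ((fun w => inner ℝ (c • y) w) '' C) = c * sSup ((fun w => inner ℝ y w) '' C) := by
  have himg : (fun w => inner ℝ (c • y) w) '' C = c • ((fun w => inner ℝ y w) '' C) := by
    rw [← Set.image_smul, Set.image_image]
    exact Set.image_congr fun w _ => by rw [real_inner_smul_left, smul_eq_mul]
  rw [himg, Real.sSup_smul_of_nonneg hc, smul_eq_mul]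

end SupportFunction

theorem mprp_beta_nonneg {μ A a B p : ℝ} (hμ : 0 < μ) (hA : A < 0) (hp : p < 0) :
    0 ≤ (-A * (|a| + a)) / max (μ * |B * a|) (-(μ * p) * |a|) := by
  have hnum : 0 ≤ -A * (|a| + a) := mul_nonneg (by linarith) (by linarith [neg_abs_le a])
  have hden : 0 ≤ -(μ * p) * |a| := mul_nonneg (by nlinarith) (abs_nonneg a)
  exact div_nonneg hnum (hden.trans (le_max_right _ _))

theorem mprp_beta_mul_le {μ A a B p : ℝ} (hμ : 0 < μ) (hA : A < 0) (hp : p < 0) :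
    (-A * (|a| + a)) / max (μ * |B * a|) (-(μ * p) * |a|) * B ≤ -(2 / μ) * A := by
  have hβ := mprp_beta_nonneg (a := a) (B := B) hμ hA hp
  have hrhs : 0 ≤ -(2 / μ) * A :=
    mul_nonneg_of_nonpos_of_nonpos (neg_nonpos.2 (by positivity)) hA.le
  rcases le_or_gt a 0 with ha | ha
  · rw [abs_of_nonpos ha, neg_add_cancel, mul_zero, zero_div, zero_mul]
    exact hrhs
  rcases le_or_gt B 0 with hB | hB
  · exact (mul_nonpos_of_nonneg_of_nonpos hβ hB).trans hrhs
  have hBa : |B * a| = B * a := abs_of_pos (mul_pos hB ha)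
  calc (-A * (|a| + a)) / max (μ * |B * a|) (-(μ * p) * |a|) * B
      ≤ (-A * (|a| + a)) / (μ * |B * a|) * B := by
        gcongr
        · exact mul_nonneg (by linarith) (by linarith [neg_abs_le a])
        · exact le_max_left _ _
    _ = -(2 / μ) * A := by
        rw [hBa, abs_of_pos ha]
        field_simp
        ring

theorem mprp_sufficient_descent_general {n m : ℕ}
    (C : Set (EuclideanSpace ℝ (Fin m)))
    (hCne : C.Nonempty) (hCcomp : IsCompact C)
    (F : EuclideanSpace ℝ (Fin n) → EuclideanSpace ℝ (Fin m))
    (h : EuclideanSpace ℝ (Fin n) → EuclideanSpace ℝ (Fin n) → ℝ)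
    (hh : ∀ x d, h x d = sSup ((fun w => (inner ℝ (fderiv ℝ F x d) w : ℝ)) '' C))
    (μ : ℝ) (hμ : 2 < μ)
    (x v d : ℕ → EuclideanSpace ℝ (Fin n)) (β : ℕ → ℝ)
    (hneg : ∀ k, h (x k) (v k) < 0)
    (hβ : ∀ k ≥ 1, β k =
      (-(h (x k) (v k)) * (|h (x (k - 1)) (v k)| + h (x (k - 1)) (v k))) /
        max (μ * |h (x k) (d (k - 1)) * h (x (k - 1)) (v k)|)
          (-(μ * h (x (k - 1)) (v (k - 1))) * |h (x (k - 1)) (v k)|))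
    (hd0 : d 0 = v 0)
    (hd : ∀ k ≥ 1, d k = v k + β k • d (k - 1)) :
    ∀ k, h (x k) (d k) ≤ (1 - 2 / μ) * h (x k) (v k) := by
  have hμ0 : 0 < μ := by linarith
  rintro (_ | k)
  · rw [hd0]
    nlinarith [hneg 0, div_pos two_pos hμ0]
  have hβk := hβ (k + 1) le_add_self
  have hdk := hd (k + 1) le_add_self
  simp only [add_tsub_cancel_right] at hβk hdk
  have hβnn : 0 ≤ β (k + 1) := hβk ▸ mprp_beta_nonneg hμ0 (hneg _) (hneg k)
  have hsplit : h (x (k + 1)) (d (k + 1)) ≤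
      h (x (k + 1)) (v (k + 1)) + β (k + 1) * h (x (k + 1)) (d k) := by
    simp only [hh, hdk, map_add, map_smul]
    rw [← sSup_image_inner_smul_of_nonneg hβnn]
    exact sSup_image_inner_add_le hCne hCcomp _ _
  have hterm := hβk ▸ mprp_beta_mul_le (B := h (x (k + 1)) (d k)) (a := h (x k) (v (k + 1)))
    hμ0 (hneg (k + 1)) (hneg k)
  linarith

theorem mprp_sufficient_descent {n m : ℕ}
    (C : Set (EuclideanSpace ℝ (Fin m)))
    (hCne : C.Nonempty) (hCcomp : IsCompact C)
    (F : EuclideanSpace ℝ (Fin n) → EuclideanSpace ℝ (Fin m))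
    (hF : ContDiff ℝ 1 F)
    (h : EuclideanSpace ℝ (Fin n) → EuclideanSpace ℝ (Fin n) → ℝ)
    (hh : ∀ x d, h x d = sSup ((fun w => (inner ℝ (fderiv ℝ F x d) w : ℝ)) '' C))
    (μ : ℝ) (hμ : 2 < μ)
    (x v d : ℕ → EuclideanSpace ℝ (Fin n)) (β : ℕ → ℝ)
    (hv : ∀ k, ∀ d', h (x k) (v k) + (1 / 2) * ‖v k‖ ^ 2 ≤ h (x k) d' + (1 / 2) * ‖d'‖ ^ 2)
    (hneg : ∀ k, h (x k) (v k) < 0)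
    (hβ : ∀ k ≥ 1, β k =
      (-(h (x k) (v k)) * (|h (x (k - 1)) (v k)| + h (x (k - 1)) (v k))) /
        max (μ * |h (x k) (d (k - 1)) * h (x (k - 1)) (v k)|)
          (-(μ * h (x (k - 1)) (v (k - 1))) * |h (x (k - 1)) (v k)|))
    (hd0 : d 0 = v 0)
    (hd : ∀ k ≥ 1, d k = v k + β k • d (k - 1)) :
    ∀ k, h (x k) (d k) ≤ (1 - 2 / μ) * h (x k) (v k) :=
  mprp_sufficient_descent_general C hCne hCcomp F h hh μ hμ x v d β hneg hβ hd0 hd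
end
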